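/- arXiv:1303.2491 — 3 statements merged into one kernel-verified Lean document; each statement's English description precedes it below -/
import Mathlib

section
/- Let $r>0$, $T\in(0,\infty]$, and let $u:(0,T)\to\mathbb{R}$ be differentiable with $u'(t)\ge u(t)^2+r\,u(t)$ for all $t\in(0,T)$. Then $u(t)\ge -\dfrac{r e^{rt}}{e^{rt}-1}$ for all $t\in(0,T)$. -/
/-!
The substitution `v = 1/u` linearizes the Riccati inequality: wherever `u ≠ 0`,
`φ(t) = e^{rt} (1/u(t) + 1/r)` has derivative `e^{rt} (r/u + 1 - u'/u²) ≤ 0`, while for the barrier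
`w(t) = -r e^{rt}/(e^{rt} - 1)` it is constantly `1/r`. If `u(b) ≥ -r` there is nothing to prove,
since `w < -r`. Otherwise `u' ≥ u(u + r) > 0` at the level `u(b)`, so going back in time `u` stays
below `u(b) < 0` on all of `(0, b]`. Then `φ(b) ≤ φ(t) < e^{rt}/r` for `0 < t < b`, and letting
`t → 0⁺` gives `φ(b) ≤ 1/r`, which is `u(b) ≥ w(b)`.
-/

open Set Real Filter Topology

theorem image_le_of_right_le_of_deriv_pos_of_eq {u u' : ℝ → ℝ} {a b c : ℝ}
    (hu : ∀ x ∈ Icc a b, HasDerivAt u (u' x) x) (hpos : ∀ x ∈ Ioc a b, u x = c → 0 < u' x)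
    (hb : u b ≤ c) : ∀ x ∈ Icc a b, u x ≤ c := by
  -- Reversing time turns this into Mathlib's fencing theorem for `y ↦ u (-y)` on `[-b, -a]`.
  have hrev : ∀ y ∈ Icc (-b) (-a), HasDerivAt (fun y => u (-y)) (-u' (-y)) y := fun y hy => by
    simpa [Function.comp_def] using
      (hu (-y) ⟨le_neg.1 hy.2, neg_le.1 hy.1⟩).comp y (hasDerivAt_neg y)
  have hfence := image_le_of_deriv_right_lt_deriv_boundary (a := -b) (b := -a) (B := fun _ => c)
    (fun y hy => (hrev y hy).continuousAt.continuousWithinAt)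
    (fun y hy => (hrev y (Ico_subset_Icc_self hy)).hasDerivWithinAt) (by simpa using hb)
    (fun _ => hasDerivAt_const _ c)
    (fun y hy hyc => neg_neg_of_pos (hpos (-y) ⟨lt_neg.1 hy.2, neg_le.1 hy.1⟩ hyc))
  intro x hx
  simpa using hfence ⟨neg_le_neg hx.2, neg_le_neg hx.1⟩

theorem antitoneOn_exp_mul_inv_add_inv {u u' : ℝ → ℝ} {r : ℝ} {D : Set ℝ} (hD : Convex ℝ D)
    (hr : r ≠ 0) (hu : ∀ x ∈ D, HasDerivAt u (u' x) x) (hne : ∀ x ∈ D, u x ≠ 0)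
    (hineq : ∀ x ∈ D, u x ^ 2 + r * u x ≤ u' x) :
    AntitoneOn (fun t => exp (r * t) * ((u t)⁻¹ + r⁻¹)) D := by
  have hφ : ∀ x ∈ D, HasDerivAt (fun t => exp (r * t) * ((u t)⁻¹ + r⁻¹))
      (exp (r * x) * (r * (u x)⁻¹ + 1 - u' x / u x ^ 2)) x := fun x hx => by
    have hexp := ((hasDerivAt_id x).const_mul r).exp
    have hinv := ((hu x hx).inv (hne x hx)).add_const r⁻¹
    have hux := hne x hx
    refine (hexp.mul hinv).congr_deriv ?_
    simp only [id, Pi.inv_apply]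
    field_simp
    ring
  refine antitoneOn_of_hasDerivWithinAt_nonpos hD
    (fun x hx => (hφ x hx).continuousAt.continuousWithinAt)
    (fun x hx => (hφ x (interior_subset hx)).hasDerivWithinAt) fun x hx => ?_
  have hxD := interior_subset hx
  have hux := hne x hxD
  have hsq : 0 < u x ^ 2 := by positivity
  have hle : r * (u x)⁻¹ + 1 ≤ u' x / u x ^ 2 := by
    rw [le_div_iff₀ hsq]
    calc (r * (u x)⁻¹ + 1) * u x ^ 2 = u x ^ 2 + r * u x := by field_simp; ring
      _ ≤ u' x := hineq x hxD
  exact mul_nonpos_of_nonneg_of_nonpos (exp_pos _).le (by linarith)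

theorem neg_mul_div_sub_one_le_of_mul_inv_add_inv_le {r E y : ℝ} (hr : 0 < r) (hE : 1 < E)
    (hy : y < 0) (h : E * (y⁻¹ + r⁻¹) ≤ r⁻¹) : -(r * E) / (E - 1) ≤ y := by
  rw [div_le_iff₀ (sub_pos.2 hE)]
  have hry : r * y * (E * (y⁻¹ + r⁻¹)) = E * (r + y) := by
    field_simp [hy.ne]
  have hmul := mul_le_mul_of_nonpos_left h (mul_neg_of_pos_of_neg hr hy).le
  rw [hry, mul_right_comm, mul_inv_cancel₀ hr.ne', one_mul] at hmul
  linarith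

theorem riccati_lower_bound {r b : ℝ} (hr : 0 < r) (hb : 0 < b) {u u' : ℝ → ℝ}
    (hu : ∀ t ∈ Ioc 0 b, HasDerivAt u (u' t) t)
    (hineq : ∀ t ∈ Ioc 0 b, u t ^ 2 + r * u t ≤ u' t) :
    -(r * exp (r * b)) / (exp (r * b) - 1) ≤ u b := by
  have hE : 1 < exp (r * b) := one_lt_exp_iff.2 (mul_pos hr hb)
  rcases le_or_gt (-r) (u b) with hub | hub
  · refine le_trans ?_ hub
    rw [div_le_iff₀ (by linarith)]
    nlinarith
  have hneg : ∀ t ∈ Ioc 0 b, u t < 0 := fun t ht =>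
    (image_le_of_right_le_of_deriv_pos_of_eq (a := t)
      (fun x hx => hu x ⟨ht.1.trans_le hx.1, hx.2⟩)
      (fun x hx hxb => by nlinarith [hineq x ⟨ht.1.trans hx.1, hx.2⟩]) le_rfl
      t ⟨le_rfl, ht.2⟩).trans_lt (by linarith)
  have hanti := antitoneOn_exp_mul_inv_add_inv (convex_Ioc 0 b) hr.ne' hu
    (fun t ht => (hneg t ht).ne) hineq
  have hbound : ∀ t ∈ Ioo 0 b, exp (r * b) * ((u b)⁻¹ + r⁻¹) ≤ exp (r * t) * r⁻¹ := fun t ht =>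
    calc exp (r * b) * ((u b)⁻¹ + r⁻¹) ≤ exp (r * t) * ((u t)⁻¹ + r⁻¹) :=
          hanti ⟨ht.1, ht.2.le⟩ ⟨hb, le_rfl⟩ ht.2.le
      _ ≤ exp (r * t) * r⁻¹ := by
          gcongr
          linarith [inv_lt_zero.2 (hneg t ⟨ht.1, ht.2.le⟩)]
  have hlim : Tendsto (fun t => exp (r * t) * r⁻¹) (𝓝[>] 0) (𝓝 r⁻¹) := by
    have hcont : Continuous (fun t => exp (r * t) * r⁻¹) := by fun_prop
    simpa using (hcont.tendsto 0).mono_left nhdsWithin_le_nhds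
  exact neg_mul_div_sub_one_le_of_mul_inv_add_inv_le hr hE (hneg b ⟨hb, le_rfl⟩)
    (ge_of_tendsto hlim (eventually_of_mem (Ioo_mem_nhdsGT hb) hbound))

theorem stmt0_general (r : ℝ) (hr : 0 < r) (T : EReal)
    (u u' : ℝ → ℝ)
    (hderiv : ∀ t : ℝ, 0 < t → (t : EReal) < T → HasDerivAt u (u' t) t)
    (hineq : ∀ t : ℝ, 0 < t → (t : EReal) < T → u t ^ 2 + r * u t ≤ u' t) :
    ∀ t : ℝ, 0 < t → (t : EReal) < T →
      -(r * Real.exp (r * t)) / (Real.exp (r * t) - 1) ≤ u t := by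
  intro b hb hbT
  have hsub : ∀ t ∈ Ioc 0 b, (t : EReal) < T := fun t ht =>
    (EReal.coe_le_coe_iff.2 ht.2).trans_lt hbT
  exact riccati_lower_bound hr hb (fun t ht => hderiv t ht.1 (hsub t ht))
    (fun t ht => hineq t ht.1 (hsub t ht))

/-- Scalar ODE comparison underlying the Li–Yau–Harnack inequality:
if `u' ≥ u^2 + r u` on `(0, T)` (with `T ∈ (0, ∞]`) then
`u(t) ≥ -r e^{rt}/(e^{rt} - 1)` on `(0, T)`. -/
theorem stmt0 (r : ℝ) (hr : 0 < r) (T : EReal) (hT : 0 < T)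
    (u u' : ℝ → ℝ)
    (hderiv : ∀ t : ℝ, 0 < t → (t : EReal) < T → HasDerivAt u (u' t) t)
    (hineq : ∀ t : ℝ, 0 < t → (t : EReal) < T → u t ^ 2 + r * u t ≤ u' t) :
    ∀ t : ℝ, 0 < t → (t : EReal) < T →
      -(r * Real.exp (r * t)) / (Real.exp (r * t) - 1) ≤ u t :=
  stmt0_general r hr T u u' hderiv hineq
end

section
/- For every $\rho\in(0,1)$ there exists a unique pair $(p,q)$ of real numbers with $0<p<1$, $q>0$, $(1-p)e^{p}=(1+q)e^{-q}$, and $p=\rho\,q$. -/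
/-!
Put `p = ρ q` and study `defect ρ q = (1 + q) e^{-q} - (1 - ρ q) e^{ρ q}` for `q ≥ 0`.
It vanishes at `0` and its derivative is `q (ρ² e^{ρ q} - e^{-q})`, whose second factor is
strictly increasing with its zero at `s = -2 log ρ / (1 + ρ) > 0`. So `defect ρ` first decreases
strictly to a negative value at `s` and then increases strictly, becoming positive at `q = 1/ρ`,
where the second term vanishes: it has exactly one positive zero.
-/

open Real Set

theorem existsUnique_zero_of_strictAntiOn_of_strictMonoOn {f : ℝ → ℝ} {a s Q : ℝ}
    (hf : ContinuousOn f (Ici s)) (hanti : StrictAntiOn f (Icc a s))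
    (hmono : StrictMonoOn f (Ici s)) (has : a < s) (hfa : f a = 0) (haQ : a ≤ Q)
    (hfQ : 0 < f Q) : ∃! x, a < x ∧ f x = 0 := by
  have ha_mem : a ∈ Icc a s := ⟨le_rfl, has.le⟩
  have hfs : f s < 0 := hfa ▸ hanti ha_mem ⟨has.le, le_rfl⟩ has
  have hsQ : s < Q := by
    by_contra! hQs
    exact hfQ.not_ge (hfa ▸ hanti.antitoneOn ha_mem ⟨haQ, hQs⟩ haQ)
  have hs_lt_of_zero : ∀ x, a < x → f x = 0 → s < x := by
    intro x hax hfx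
    by_contra! hxs
    exact (hfa ▸ hfx ▸ hanti ha_mem ⟨hax.le, hxs⟩ hax).false
  obtain ⟨x, hx, hfx⟩ := intermediate_value_Ioo hsQ.le (hf.mono Icc_subset_Ici_self) ⟨hfs, hfQ⟩
  refine ⟨x, ⟨has.trans hx.1, hfx⟩, fun y ⟨hay, hfy⟩ => ?_⟩
  exact hmono.injOn (hs_lt_of_zero y hay hfy).le hx.1.le (hfy.trans hfx.symm)

noncomputable def defect (ρ q : ℝ) : ℝ := (1 + q) * exp (-q) - (1 - ρ * q) * exp (ρ * q)

noncomputable def criticalPoint (ρ : ℝ) : ℝ := -2 * log ρ / (1 + ρ)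

section

variable {ρ : ℝ}

theorem continuous_defect : Continuous (defect ρ) := by
  unfold defect
  fun_prop

theorem defect_zero : defect ρ 0 = 0 := by
  simp [defect]

theorem hasDerivAt_defect (q : ℝ) :
    HasDerivAt (defect ρ) (q * (ρ ^ 2 * exp (ρ * q) - exp (-q))) q := by
  have hleft := ((hasDerivAt_id q).const_add 1).mul (hasDerivAt_neg q).exp
  have hright := (((hasDerivAt_id q).const_mul ρ).const_sub 1).mul
    ((hasDerivAt_id q).const_mul ρ).exp
  exact (hleft.sub hright).congr_deriv (by simp only [id]; ring)

theorem strictMono_sq_mul_exp_sub_exp_neg (hρ : 0 < ρ) :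
    StrictMono fun q => ρ ^ 2 * exp (ρ * q) - exp (-q) := by
  intro x y hxy
  have hρx : exp (ρ * x) < exp (ρ * y) := exp_lt_exp.2 (mul_lt_mul_of_pos_left hxy hρ)
  have hneg : exp (-y) < exp (-x) := exp_lt_exp.2 (neg_lt_neg hxy)
  have := mul_lt_mul_of_pos_left hρx (pow_pos hρ 2)
  simp only
  linarith

theorem sq_mul_exp_sub_exp_neg_criticalPoint (hρ : 0 < ρ) :
    ρ ^ 2 * exp (ρ * criticalPoint ρ) - exp (-criticalPoint ρ) = 0 := by
  have hsplit : ρ * criticalPoint ρ = -log (ρ ^ 2) + -criticalPoint ρ := by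
    have : 1 + ρ ≠ 0 := by positivity
    rw [log_pow, criticalPoint]
    field_simp
    push_cast
    ring
  rw [hsplit, exp_add, exp_neg (log _), exp_log (by positivity), ← mul_assoc,
    mul_inv_cancel₀ (by positivity), one_mul, sub_self]

theorem criticalPoint_pos (hρ0 : 0 < ρ) (hρ1 : ρ < 1) : 0 < criticalPoint ρ :=
  div_pos (by linarith [log_neg hρ0 hρ1]) (by linarith)

theorem strictAntiOn_defect (hρ : 0 < ρ) : StrictAntiOn (defect ρ) (Icc 0 (criticalPoint ρ)) := by
  refine strictAntiOn_of_deriv_neg (convex_Icc _ _) continuous_defect.continuousOn ?_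
  rw [interior_Icc]
  rintro q ⟨hq0, hqs⟩
  rw [(hasDerivAt_defect q).deriv]
  refine mul_neg_of_pos_of_neg hq0 ?_
  rw [← sq_mul_exp_sub_exp_neg_criticalPoint hρ]
  exact strictMono_sq_mul_exp_sub_exp_neg hρ hqs

theorem strictMonoOn_defect (hρ0 : 0 < ρ) (hρ1 : ρ < 1) :
    StrictMonoOn (defect ρ) (Ici (criticalPoint ρ)) := by
  refine strictMonoOn_of_deriv_pos (convex_Ici _) continuous_defect.continuousOn ?_
  rw [interior_Ici]
  intro q (hsq : criticalPoint ρ < q)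
  rw [(hasDerivAt_defect q).deriv]
  refine mul_pos ((criticalPoint_pos hρ0 hρ1).trans hsq) ?_
  rw [← sq_mul_exp_sub_exp_neg_criticalPoint hρ0]
  exact strictMono_sq_mul_exp_sub_exp_neg hρ0 hsq

theorem defect_inv_pos (hρ : 0 < ρ) : 0 < defect ρ ρ⁻¹ := by
  rw [defect, mul_inv_cancel₀ hρ.ne', sub_self, zero_mul, sub_zero]
  positivity

theorem existsUnique_defect_eq_zero (hρ0 : 0 < ρ) (hρ1 : ρ < 1) :
    ∃! q, 0 < q ∧ defect ρ q = 0 :=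
  existsUnique_zero_of_strictAntiOn_of_strictMonoOn continuous_defect.continuousOn
    (strictAntiOn_defect hρ0) (strictMonoOn_defect hρ0 hρ1) (criticalPoint_pos hρ0 hρ1)
    defect_zero (inv_pos.2 hρ0).le (defect_inv_pos hρ0)

theorem mul_lt_one_of_defect_eq_zero {q : ℝ} (hq : -1 < q) (h : defect ρ q = 0) : ρ * q < 1 := by
  have hpos : 0 < (1 - ρ * q) * exp (ρ * q) := by
    rw [← sub_eq_zero.1 h]
    exact mul_pos (by linarith) (exp_pos _)
  linarith [pos_of_mul_pos_left hpos (exp_pos _).le]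

end

/-- For every `ρ ∈ (0,1)` there is a unique pair `(p,q)` with `0 < p < 1`, `q > 0`,
`(1-p)e^p = (1+q)e^{-q}` and `p = ρ q`. -/
theorem stmt12 (ρ : ℝ) (hρ : ρ ∈ Set.Ioo (0:ℝ) 1) :
    ∃! pq : ℝ × ℝ, 0 < pq.1 ∧ pq.1 < 1 ∧ 0 < pq.2 ∧
      (1 - pq.1) * Real.exp pq.1 = (1 + pq.2) * Real.exp (-pq.2) ∧ pq.1 = ρ * pq.2 := by
  obtain ⟨hρ0, hρ1⟩ := hρ
  obtain ⟨q, ⟨hq, hdq⟩, huniq⟩ := existsUnique_defect_eq_zero hρ0 hρ1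
  refine ⟨(ρ * q, q), ⟨mul_pos hρ0 hq, mul_lt_one_of_defect_eq_zero (by linarith) hdq, hq,
    (sub_eq_zero.1 hdq).symm, rfl⟩, ?_⟩
  rintro ⟨p, q'⟩ ⟨-, -, hq', heq, hp : p = ρ * q'⟩
  subst hp
  rw [huniq q' ⟨hq', sub_eq_zero.2 heq.symm⟩]
end

section
/- For $k\in(0,1)$ let $y_1(k)=1-p(k)\in(0,1)$ and $y_2(k)=1+q(k)\in(1,\infty)$ denote the two solutions of $y=ke^{y-1}$, so $p(k),q(k)>0$. Then as $k\to1^-$ one has $p(k)\to0$, $q(k)\to0$ and $p(k)/q(k)\to1$; and as $k\to0^+$ one has $p(k)\to1$, $q(k)\to+\infty$ and $p(k)/q(k)\to0$. -/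
/-!
Write `k = g p = h q` with `g x = (1 - x) eˣ` and `h x = (1 + x) e⁻ˣ`. Both are strictly
decreasing on `[0, ∞)` with value `1` at `0`, so `p, q → 0` as `k → 1⁻`; and `k ≥ 1 - p`,
`k ≥ e^{-q}` give the limits as `k → 0⁺`. For the ratio, `g ≤ h` on `[0, ∞)` forces `p ≤ q`,
while `eˣ ≥ 1 + x + x²/2` shows `1 - g p ≤ p² (1 + p) / 2` and
`1 - h q ≥ (q² / 2) / (1 + q + q² / 2)`, so `(p / q)² → 1`.
-/

open Real Set Filter Topology

theorem hasDerivAt_one_sub_mul_exp (x : ℝ) :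
    HasDerivAt (fun x => (1 - x) * exp x) (-(x * exp x)) x :=
  (((hasDerivAt_id' x).const_sub 1).mul (hasDerivAt_exp x)).congr_deriv (by ring)

theorem hasDerivAt_one_add_mul_exp_neg (x : ℝ) :
    HasDerivAt (fun x => (1 + x) * exp (-x)) (-(x * exp (-x))) x :=
  (((hasDerivAt_id' x).const_add 1).mul (hasDerivAt_neg x).exp).congr_deriv (by ring)

theorem strictAntiOn_one_sub_mul_exp : StrictAntiOn (fun x => (1 - x) * exp x) (Ici 0) :=
  strictAntiOn_of_deriv_neg (convex_Ici 0)
    (fun x _ => (hasDerivAt_one_sub_mul_exp x).continuousAt.continuousWithinAt)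
    fun x hx => by
      rw [interior_Ici, mem_Ioi] at hx
      rw [(hasDerivAt_one_sub_mul_exp x).deriv, neg_lt_zero]
      positivity

theorem strictAntiOn_one_add_mul_exp_neg : StrictAntiOn (fun x => (1 + x) * exp (-x)) (Ici 0) :=
  strictAntiOn_of_deriv_neg (convex_Ici 0)
    (fun x _ => (hasDerivAt_one_add_mul_exp_neg x).continuousAt.continuousWithinAt)
    fun x hx => by
      rw [interior_Ici, mem_Ioi] at hx
      rw [(hasDerivAt_one_add_mul_exp_neg x).deriv, neg_lt_zero]
      positivity

theorem one_sub_mul_exp_le_one_add_mul_exp_neg {x : ℝ} (hx : 0 ≤ x) :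
    (1 - x) * exp x ≤ (1 + x) * exp (-x) := by
  have hderiv (t : ℝ) : HasDerivAt (fun t => (1 + t) * exp (-t) - (1 - t) * exp t)
      (t * (exp t - exp (-t))) t :=
    ((hasDerivAt_one_add_mul_exp_neg t).sub (hasDerivAt_one_sub_mul_exp t)).congr_deriv
      (by ring)
  have hmono : MonotoneOn (fun t => (1 + t) * exp (-t) - (1 - t) * exp t) (Ici 0) :=
    monotoneOn_of_hasDerivWithinAt_nonneg (convex_Ici 0)
      (fun t _ => (hderiv t).continuousAt.continuousWithinAt)
      (fun t _ => (hderiv t).hasDerivWithinAt)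
      fun t ht => by
        rw [interior_Ici, mem_Ioi] at ht
        exact mul_nonneg ht.le (sub_nonneg.2 (exp_le_exp.2 (by linarith)))
  simpa using hmono self_mem_Ici hx hx

theorem tendsto_of_strictAntiOn_Ici {f x : ℝ → ℝ} {a b : ℝ} (hf : StrictAntiOn f (Ici a))
    (hb : f a = b) (hx : ∀ᶠ k in 𝓝[<] b, a ≤ x k ∧ f (x k) = k) :
    Tendsto x (𝓝[<] b) (𝓝 a) := by
  refine tendsto_order.2 ⟨fun c hc => ?_, fun c hc => ?_⟩
  · filter_upwards [hx] with k hk using hc.trans_le hk.1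
  · have hfc : f c < b := hb ▸ hf self_mem_Ici hc.le hc
    filter_upwards [hx, Ioo_mem_nhdsLT hfc] with k hk hkc
    by_contra! hck
    have := hf.antitoneOn (mem_Ici.2 hc.le) (mem_Ici.2 hk.1) hck
    linarith [hk.2, hkc.1]

theorem le_of_one_sub_mul_exp_eq {p q : ℝ} (hp : 0 ≤ p) (hq : 0 ≤ q)
    (h : (1 - p) * exp p = (1 + q) * exp (-q)) : p ≤ q :=
  (strictAntiOn_one_add_mul_exp_neg.le_iff_ge (mem_Ici.2 hq) (mem_Ici.2 hp)).1
    (h ▸ one_sub_mul_exp_le_one_add_mul_exp_neg hp)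

theorem sq_le_sq_mul_of_one_sub_mul_exp_eq {p q : ℝ} (hp₀ : 0 ≤ p) (hp₁ : p ≤ 1) (hq : 0 ≤ q)
    (h : (1 - p) * exp p = (1 + q) * exp (-q)) :
    q ^ 2 ≤ p ^ 2 * ((1 + p) * (1 + q + q ^ 2 / 2)) := by
  have hg : 1 - p ^ 2 * (1 + p) / 2 ≤ (1 - p) * exp p :=
    calc 1 - p ^ 2 * (1 + p) / 2 = (1 - p) * (1 + p + p ^ 2 / 2) := by ring
      _ ≤ (1 - p) * exp p :=
        mul_le_mul_of_nonneg_left (quadratic_le_exp_of_nonneg hp₀) (by linarith)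
  have hD : 0 < 1 + q + q ^ 2 / 2 := by positivity
  have hh : (1 + q) * exp (-q) * (1 + q + q ^ 2 / 2) ≤ 1 + q := by
    rw [exp_neg, mul_assoc]
    refine mul_le_of_le_one_right (by linarith) ?_
    rw [inv_mul_le_one₀ (exp_pos q)]
    exact quadratic_le_exp_of_nonneg hq
  nlinarith

theorem tendsto_div_of_one_sub_mul_exp_eq {l : Filter ℝ} {p q : ℝ → ℝ}
    (hp : Tendsto p l (𝓝 0)) (hq : Tendsto q l (𝓝 0))
    (h : ∀ᶠ k in l, 0 ≤ p k ∧ p k ≤ 1 ∧ 0 < q k ∧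
      (1 - p k) * exp (p k) = (1 + q k) * exp (-q k)) :
    Tendsto (fun k => p k / q k) l (𝓝 1) := by
  have hlower : Tendsto (fun k => ((1 + p k) * (1 + q k + q k ^ 2 / 2))⁻¹) l (𝓝 1) := by
    simpa using ((tendsto_const_nhds.add hp).mul
      ((tendsto_const_nhds.add hq).add ((hq.pow 2).div_const 2))).inv₀
      (by norm_num : (1 + 0 : ℝ) * (1 + 0 + 0 ^ 2 / 2) ≠ 0)
  refine tendsto_of_tendsto_of_tendsto_of_le_of_le' hlower tendsto_const_nhds ?_ ?_
  · filter_upwards [h] with k ⟨hp₀, hp₁, hq₀, hk⟩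
    have hpq := le_of_one_sub_mul_exp_eq hp₀ hq₀.le hk
    have hsq := sq_le_sq_mul_of_one_sub_mul_exp_eq hp₀ hp₁ hq₀.le hk
    calc ((1 + p k) * (1 + q k + q k ^ 2 / 2))⁻¹ ≤ (p k / q k) ^ 2 := by
          rw [div_pow, inv_le_iff_one_le_mul₀ (by positivity), div_mul_eq_mul_div,
            le_div_iff₀ (by positivity)]
          linarith
      _ ≤ p k / q k := pow_le_of_le_one (by positivity) ((div_le_one hq₀).2 hpq) two_ne_zero
  · filter_upwards [h] with k ⟨hp₀, _, hq₀, hk⟩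
    exact (div_le_one hq₀).2 (le_of_one_sub_mul_exp_eq hp₀ hq₀.le hk)

theorem tendsto_nhds_one_of_one_sub_mul_exp_eq {p : ℝ → ℝ}
    (h : ∀ᶠ k in 𝓝[>] 0, 0 ≤ p k ∧ p k ≤ 1 ∧ (1 - p k) * exp (p k) = k) :
    Tendsto p (𝓝[>] 0) (𝓝 1) := by
  have hlower : Tendsto (fun k : ℝ => 1 - k) (𝓝[>] 0) (𝓝 1) :=
    ((continuous_const.sub continuous_id).tendsto' 0 1 (sub_zero 1)).mono_left
      nhdsWithin_le_nhds
  refine tendsto_of_tendsto_of_tendsto_of_le_of_le' hlower tendsto_const_nhds ?_ ?_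
  · filter_upwards [h] with k ⟨hp₀, hp₁, hk⟩
    have := le_mul_of_one_le_right (by linarith : 0 ≤ 1 - p k) (one_le_exp hp₀)
    linarith
  · filter_upwards [h] with k hk using hk.2.1

theorem tendsto_atTop_of_one_add_mul_exp_neg_eq {q : ℝ → ℝ}
    (h : ∀ᶠ k in 𝓝[>] 0, 0 ≤ q k ∧ (1 + q k) * exp (-q k) = k) :
    Tendsto q (𝓝[>] 0) atTop := by
  refine tendsto_atTop_mono' _ ?_ (tendsto_neg_atBot_atTop.comp tendsto_log_nhdsGT_zero)
  filter_upwards [h] with k ⟨hq, hk⟩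
  have hexp := le_mul_of_one_le_left (b := exp (-q k)) (exp_pos _).le (by linarith : 1 ≤ 1 + q k)
  have := log_le_log (exp_pos _) (hk ▸ hexp)
  rw [log_exp] at this
  simp only [Function.comp_apply]
  linarith

theorem eq_mul_exp_of_eq_mul_exp_sub_one {y k : ℝ} (h : y = k * exp (y - 1)) :
    k = y * exp (1 - y) :=
  calc k = k * exp (y - 1) * exp (1 - y) := by rw [mul_assoc, ← exp_add]; simp
    _ = y * exp (1 - y) := by rw [← h]

/-- Boundary behaviour of the two zeros `y₁ = 1 - p(k)`, `y₂ = 1 + q(k)` of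
`y = k e^{y-1}`: as `k → 1⁻`, `p → 0`, `q → 0`, `p/q → 1`; as `k → 0⁺`,
`p → 1`, `q → +∞`, `p/q → 0`. -/
theorem stmt13 (p q : ℝ → ℝ)
    (hp : ∀ k ∈ Set.Ioo (0:ℝ) 1, 0 < p k ∧ p k < 1)
    (hq : ∀ k ∈ Set.Ioo (0:ℝ) 1, 0 < q k)
    (h1 : ∀ k ∈ Set.Ioo (0:ℝ) 1, 1 - p k = k * Real.exp ((1 - p k) - 1))
    (h2 : ∀ k ∈ Set.Ioo (0:ℝ) 1, 1 + q k = k * Real.exp ((1 + q k) - 1)) :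
    Filter.Tendsto p (nhdsWithin 1 (Set.Iio 1)) (nhds 0) ∧
    Filter.Tendsto q (nhdsWithin 1 (Set.Iio 1)) (nhds 0) ∧
    Filter.Tendsto (fun k => p k / q k) (nhdsWithin 1 (Set.Iio 1)) (nhds 1) ∧
    Filter.Tendsto p (nhdsWithin 0 (Set.Ioi 0)) (nhds 1) ∧
    Filter.Tendsto q (nhdsWithin 0 (Set.Ioi 0)) Filter.atTop ∧
    Filter.Tendsto (fun k => p k / q k) (nhdsWithin 0 (Set.Ioi 0)) (nhds 0) := by
  have hg (k) (hk : k ∈ Ioo (0:ℝ) 1) : (1 - p k) * exp (p k) = k := by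
    simpa using (eq_mul_exp_of_eq_mul_exp_sub_one (h1 k hk)).symm
  have hh (k) (hk : k ∈ Ioo (0:ℝ) 1) : (1 + q k) * exp (-q k) = k := by
    simpa using (eq_mul_exp_of_eq_mul_exp_sub_one (h2 k hk)).symm
  have near_one : ∀ᶠ k in 𝓝[<] (1:ℝ), k ∈ Ioo 0 1 := Ioo_mem_nhdsLT one_pos
  have near_zero : ∀ᶠ k in 𝓝[>] (0:ℝ), k ∈ Ioo 0 1 := Ioo_mem_nhdsGT one_pos
  have hp_one : Tendsto p (𝓝[<] 1) (𝓝 0) :=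
    tendsto_of_strictAntiOn_Ici strictAntiOn_one_sub_mul_exp (by simp) <| by
      filter_upwards [near_one] with k hk using ⟨(hp k hk).1.le, hg k hk⟩
  have hq_one : Tendsto q (𝓝[<] 1) (𝓝 0) :=
    tendsto_of_strictAntiOn_Ici strictAntiOn_one_add_mul_exp_neg (by simp) <| by
      filter_upwards [near_one] with k hk using ⟨(hq k hk).le, hh k hk⟩
  have hq_zero : Tendsto q (𝓝[>] 0) atTop :=
    tendsto_atTop_of_one_add_mul_exp_neg_eq <| by
      filter_upwards [near_zero] with k hk using ⟨(hq k hk).le, hh k hk⟩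
  have hp_zero : Tendsto p (𝓝[>] 0) (𝓝 1) :=
    tendsto_nhds_one_of_one_sub_mul_exp_eq <| by
      filter_upwards [near_zero] with k hk using ⟨(hp k hk).1.le, (hp k hk).2.le, hg k hk⟩
  refine ⟨hp_one, hq_one, ?_, hp_zero, hq_zero, hp_zero.div_atTop hq_zero⟩
  refine tendsto_div_of_one_sub_mul_exp_eq hp_one hq_one ?_
  filter_upwards [near_one] with k hk
  exact ⟨(hp k hk).1.le, (hp k hk).2.le, hq k hk, (hg k hk).trans (hh k hk).symm⟩
end
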